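/- arXiv:0912.5403 — 2 statements merged into one kernel-verified Lean document; each statement's English description precedes it below -/
import Mathlib

section
/- In U_q(gl(N)), for all 1 ≤ i < j ≤ N one has [e_{ij}, e_{ji}] = (q^{e_{ii} - e_{jj}} - q^{e_{jj} - e_{ii}})/(q - q^{-1}), i.e. e_{ij} e_{ji} - e_{ji} e_{ij} = (q^{e_{ii}} q^{-e_{jj}} - q^{e_{jj}} q^{-e_{ii}})/(q - q^{-1}). -/
/-!
Common setup: the quantum algebra `U_q(gl(N))` over `k = ℚ(q)`, presented by
generators `q^{±e_{ii}}` (`K i`, `Kinv i`), `e_{i,i+1}` (`E i`), `e_{i+1,i}` (`F i`)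
(1-based indices; out-of-range generators are set to `0`, which yields an algebra
isomorphic to the usual presentation), together with the composite root vectors.
-/

noncomputable section

open scoped Classical

/-- The ground field `k = ℚ(q)`. -/
abbrev kq : Type := RatFunc ℚ

/-- The indeterminate `q`. -/
def qq : kq := RatFunc.X

/-- Generators of `U_q(gl(N))`: `K i = q^{e_{ii}}`, `Kinv i = q^{-e_{ii}}`,
`E i = e_{i,i+1}`, `F i = e_{i+1,i}` (1-based). -/
inductive UqGen : Type
  | K : ℕ → UqGen
  | Kinv : ℕ → UqGen
  | E : ℕ → UqGen
  | F : ℕ → UqGen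

/-- `q^{e_{ii}}` in the free algebra. -/
def fK (i : ℕ) : FreeAlgebra kq UqGen := FreeAlgebra.ι kq (UqGen.K i)
/-- `q^{-e_{ii}}` in the free algebra. -/
def fKinv (i : ℕ) : FreeAlgebra kq UqGen := FreeAlgebra.ι kq (UqGen.Kinv i)
/-- `e_{i,i+1}` in the free algebra. -/
def fE (i : ℕ) : FreeAlgebra kq UqGen := FreeAlgebra.ι kq (UqGen.E i)
/-- `e_{i+1,i}` in the free algebra. -/
def fF (i : ℕ) : FreeAlgebra kq UqGen := FreeAlgebra.ι kq (UqGen.F i)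

/-- The defining relations of `U_q(gl(N))`.  Valid index ranges: `1 ≤ i ≤ N` for the
Cartan generators, `1 ≤ i ≤ N-1` for `E i`, `F i`; out-of-range generators are set to `0`. -/
inductive UqRel (N : ℕ) : FreeAlgebra kq UqGen → FreeAlgebra kq UqGen → Prop
  | Kzero (i : ℕ) (h : i = 0 ∨ N < i) : UqRel N (fK i) 0
  | Kinvzero (i : ℕ) (h : i = 0 ∨ N < i) : UqRel N (fKinv i) 0
  | Ezero (i : ℕ) (h : i = 0 ∨ N < i + 1) : UqRel N (fE i) 0
  | Fzero (i : ℕ) (h : i = 0 ∨ N < i + 1) : UqRel N (fF i) 0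
  | KKinv (i : ℕ) (h1 : 1 ≤ i) (h2 : i ≤ N) : UqRel N (fK i * fKinv i) 1
  | KinvK (i : ℕ) (h1 : 1 ≤ i) (h2 : i ≤ N) : UqRel N (fKinv i * fK i) 1
  | KK (i j : ℕ) (h1 : 1 ≤ i) (h2 : i ≤ N) (h3 : 1 ≤ j) (h4 : j ≤ N) :
      UqRel N (fK i * fK j) (fK j * fK i)
  | KE (i j : ℕ) (h1 : 1 ≤ i) (h2 : i ≤ N) (h3 : 1 ≤ j) (h4 : j + 1 ≤ N) :
      UqRel N (fK i * fE j * fKinv i)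
        ((qq ^ (((if i = j then 1 else 0) - (if i = j + 1 then 1 else 0) : ℤ))) • fE j)
  | KF (i j : ℕ) (h1 : 1 ≤ i) (h2 : i ≤ N) (h3 : 1 ≤ j) (h4 : j + 1 ≤ N) :
      UqRel N (fK i * fF j * fKinv i)
        ((qq ^ (((if i = j + 1 then 1 else 0) - (if i = j then 1 else 0) : ℤ))) • fF j)
  | EF (i j : ℕ) (h1 : 1 ≤ i) (h2 : i + 1 ≤ N) (h3 : 1 ≤ j) (h4 : j + 1 ≤ N) :
      UqRel N (fE i * fF j - fF j * fE i)
        (if i = j then (qq - qq⁻¹)⁻¹ • (fK i * fKinv (i + 1) - fK (i + 1) * fKinv i) else 0)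
  | EE (i j : ℕ) (h1 : 1 ≤ i) (h2 : i + 1 ≤ N) (h3 : 1 ≤ j) (h4 : j + 1 ≤ N)
      (h5 : i + 2 ≤ j ∨ j + 2 ≤ i) : UqRel N (fE i * fE j) (fE j * fE i)
  | FF (i j : ℕ) (h1 : 1 ≤ i) (h2 : i + 1 ≤ N) (h3 : 1 ≤ j) (h4 : j + 1 ≤ N)
      (h5 : i + 2 ≤ j ∨ j + 2 ≤ i) : UqRel N (fF i * fF j) (fF j * fF i)
  | SerreE (i j : ℕ) (h1 : 1 ≤ i) (h2 : i + 1 ≤ N) (h3 : 1 ≤ j) (h4 : j + 1 ≤ N)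
      (h5 : i + 1 = j ∨ j + 1 = i) :
      UqRel N (fE i ^ 2 * fE j - (qq + qq⁻¹) • (fE i * fE j * fE i) + fE j * fE i ^ 2) 0
  | SerreF (i j : ℕ) (h1 : 1 ≤ i) (h2 : i + 1 ≤ N) (h3 : 1 ≤ j) (h4 : j + 1 ≤ N)
      (h5 : i + 1 = j ∨ j + 1 = i) :
      UqRel N (fF i ^ 2 * fF j - (qq + qq⁻¹) • (fF i * fF j * fF i) + fF j * fF i ^ 2) 0

/-- The quantum algebra `U_q(gl(N))`. -/
abbrev Uq (N : ℕ) : Type := RingQuot (UqRel N)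

/-- Canonical projection onto `U_q(gl(N))`. -/
def mkU (N : ℕ) : FreeAlgebra kq UqGen →ₐ[kq] Uq N := RingQuot.mkAlgHom kq (UqRel N)

/-- `q^{e_{ii}}` in `U_q(gl(N))`. -/
def KU (N i : ℕ) : Uq N := mkU N (fK i)
/-- `q^{-e_{ii}}` in `U_q(gl(N))`. -/
def KinvU (N i : ℕ) : Uq N := mkU N (fKinv i)
/-- `e_{i,i+1}` in `U_q(gl(N))`. -/
def EU (N i : ℕ) : Uq N := mkU N (fE i)
/-- `e_{i+1,i}` in `U_q(gl(N))`. -/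
def FU (N i : ℕ) : Uq N := mkU N (fF i)

/-- `eUpD N i d` is the raising composite root vector `e_{i,i+d}`:
`e_{i,i+1} = E i` and `e_{ij} = e_{i,j-1} e_{j-1,j} - q⁻¹ e_{j-1,j} e_{i,j-1}`. -/
def eUpD (N i : ℕ) : ℕ → Uq N
  | 0 => 0
  | 1 => EU N i
  | (d + 2) => eUpD N i (d + 1) * EU N (i + d + 1) - qq⁻¹ • (EU N (i + d + 1) * eUpD N i (d + 1))

/-- `eDnD N i d` is the lowering composite root vector `e_{i+d,i}`:
`e_{i+1,i} = F i` and `e_{ji} = e_{j,j-1} e_{j-1,i} - q e_{j-1,i} e_{j,j-1}`. -/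
def eDnD (N i : ℕ) : ℕ → Uq N
  | 0 => 0
  | 1 => FU N i
  | (d + 2) => FU N (i + d + 1) * eDnD N i (d + 1) - qq • (eDnD N i (d + 1) * FU N (i + d + 1))

/-- The Cartan–Weyl root vector `e_{ij}` (`i ≠ j`) of `U_q(gl(N))`. -/
def eGen (N i j : ℕ) : Uq N :=
  if i < j then eUpD N i (j - i) else if j < i then eDnD N j (i - j) else 0

/-- Primed raising composite root vectors: `e'_{i,i+1} = e_{i,i+1}` and
`e'_{ij} = e'_{i,j-1} e_{j-1,j} - q e_{j-1,j} e'_{i,j-1}`. -/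
def eUpD' (N i : ℕ) : ℕ → Uq N
  | 0 => 0
  | 1 => EU N i
  | (d + 2) => eUpD' N i (d + 1) * EU N (i + d + 1) - qq • (EU N (i + d + 1) * eUpD' N i (d + 1))

/-- Primed lowering composite root vectors: `e'_{i+1,i} = e_{i+1,i}` and
`e'_{ji} = e_{j,j-1} e'_{j-1,i} - q⁻¹ e'_{j-1,i} e_{j,j-1}`. -/
def eDnD' (N i : ℕ) : ℕ → Uq N
  | 0 => 0
  | 1 => FU N i
  | (d + 2) => FU N (i + d + 1) * eDnD' N i (d + 1) - qq⁻¹ • (eDnD' N i (d + 1) * FU N (i + d + 1))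

/-- The primed Cartan–Weyl root vector `e'_{ij}` of `U_q(gl(N))`. -/
def eGen' (N i j : ℕ) : Uq N :=
  if i < j then eUpD' N i (j - i) else if j < i then eDnD' N j (i - j) else 0

end

/-!
Induction on `j - i`. Put `A = e_{ij}`, `B = e_{ji}`, `E = e_{j,j+1}`, `F = e_{j+1,j}`, so that
`e_{i,j+1} = [A, E]_{q⁻¹}` and `e_{j+1,i} = [F, B]_q`, while `A` commutes with `F` and `E` with `B`.
By induction `[A, B] = (C - C')/(q - q⁻¹)` with `C = q^{e_{ii} - e_{jj}}`, `C' = C⁻¹`, and by the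
defining relations `[E, F] = (D - D')/(q - q⁻¹)` with `D = q^{e_{jj} - e_{j+1,j+1}}`, `D' = D⁻¹`.
Each of `C, C', D, D'` `q`-commutes with each of `A, B, E, F` with a factor `q^{±1}`, read off
from the weights `ε_a - ε_b` of the root vectors. Expanding `[[A, E]_{q⁻¹}, [F, B]_q]` with these
rules, everything cancels except `(C D - D' C')/(q - q⁻¹)`, where `C D = q^{e_{ii} - e_{j+1,j+1}}`
and `D' C' = (C D)⁻¹`.
-/

section QBracket

variable {K R : Type*} [Field K] [Ring R] [Algebra K R]

/-- The `q`-commutator `[x, y]_a`. -/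
def qBracket (a : K) (x y : R) : R := x * y - a • (y * x)

def QCommute (c : K) (x y : R) : Prop := x * y = c • (y * x)

theorem qCommute_one_iff {x y : R} : QCommute (1 : K) x y ↔ Commute x y := by
  rw [QCommute, one_smul]; rfl

namespace QCommute

variable {a c c₁ c₂ : K} {x x₁ x₂ y z : R}

theorem eq (h : QCommute c x y) : x * y = c • (y * x) := h

theorem left_comm (h : QCommute c x y) (z : R) : x * (y * z) = c • (y * (x * z)) := by
  rw [← mul_assoc, h, smul_mul_assoc, mul_assoc]

theorem of_mul_mul_eq {k k' : R} (hk : k' * k = 1) (h : k * y * k' = c • y) : QCommute c k y := by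
  rw [QCommute, ← smul_mul_assoc, ← h, mul_assoc, hk, mul_one]

theorem mul_left (h₁ : QCommute c₁ x₁ y) (h₂ : QCommute c₂ x₂ y) :
    QCommute (c₁ * c₂) (x₁ * x₂) y := by
  rw [QCommute, mul_assoc, h₂, mul_smul_comm, ← mul_assoc, h₁, smul_mul_assoc, smul_smul,
    mul_comm c₂, mul_assoc]

theorem inv_left {k : R} (h : QCommute c k y) (hk : k * x = 1) (hk' : x * k = 1) :
    QCommute c⁻¹ x y := by
  have hyx : y * x = c • (x * y) :=
    calc y * x = x * (k * y) * x := by rw [← mul_assoc, hk', one_mul]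
      _ = c • (x * y * (k * x)) := by rw [h, mul_smul_comm, smul_mul_assoc]; simp only [mul_assoc]
      _ = c • (x * y) := by rw [hk, mul_one]
  rcases eq_or_ne c 0 with rfl | hc
  · have hy : y = 0 := by rw [← one_mul y, ← hk', mul_assoc, h, zero_smul, mul_zero]
    simp [QCommute, hy]
  · rw [QCommute, hyx, inv_smul_smul₀ hc]

theorem qBracket_right (hy : QCommute c₁ x y) (hz : QCommute c₂ x z) :
    QCommute (c₁ * c₂) x (qBracket a y z) := by
  simp only [QCommute, qBracket, mul_sub, sub_mul, mul_smul_comm, smul_mul_assoc, mul_assoc,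
    hy.left_comm, hz.left_comm, hy.eq, hz.eq, smul_sub, smul_smul]
  module

end QCommute

theorem Commute.qBracket_right {a : K} {x y z : R} (hy : Commute x y) (hz : Commute x z) :
    Commute x (qBracket a y z) :=
  (hy.mul_right hz).sub_right ((hz.mul_right hy).smul_right a)

theorem commutator_qBracket_qBracket {u : K} (hu : u - u⁻¹ ≠ 0) {A B E F C C' D D' : R}
    (hAF : Commute A F) (hEB : Commute E B)
    (hAB : A * B - B * A = (u - u⁻¹)⁻¹ • (C - C'))
    (hEF : E * F - F * E = (u - u⁻¹)⁻¹ • (D - D'))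
    (hCE : QCommute u⁻¹ C E) (hC'E : QCommute u C' E)
    (hCF : QCommute u C F) (hC'F : QCommute u⁻¹ C' F)
    (hDA : QCommute u⁻¹ D A) (hD'A : QCommute u D' A)
    (hDB : QCommute u D B) (hD'B : QCommute u⁻¹ D' B)
    (hCD : Commute C D) (hC'D : Commute C' D) (hCD' : Commute C D') (hC'D' : Commute C' D') :
    qBracket u⁻¹ A E * qBracket u F B - qBracket u F B * qBracket u⁻¹ A E =
      (u - u⁻¹)⁻¹ • (C * D - D' * C') := by
  rw [sub_eq_iff_eq_add] at hAB hEF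
  have hAB' (x : R) : A * (B * x) = (u - u⁻¹)⁻¹ • (C - C') * x + B * (A * x) := by
    rw [← mul_assoc, hAB, add_mul, mul_assoc]
  have hEF' (x : R) : E * (F * x) = (u - u⁻¹)⁻¹ • (D - D') * x + F * (E * x) := by
    rw [← mul_assoc, hEF, add_mul, mul_assoc]
  simp only [qBracket, mul_sub, sub_mul, mul_add, smul_mul_assoc, mul_smul_comm,
    smul_smul, smul_add, smul_sub, mul_assoc,
    hAF.eq, hEB.eq, hAB, hEF, hCE.eq, hC'E.eq, hCF.eq, hC'F.eq, hDA.eq, hD'A.eq, hDB.eq, hD'B.eq,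
    hCD.symm.eq, hC'D.symm.eq, hCD'.symm.eq, hC'D'.eq,
    hAF.left_comm, hEB.left_comm, hAB', hEF', hCF.left_comm, hC'F.left_comm, hDB.left_comm,
    hD'B.left_comm]
  have hu0 : u ≠ 0 := by rintro rfl; simp at hu
  -- `field_simp` writes `u - u⁻¹` as `(u ^ 2 - 1) / u`
  have hu2 : u ^ 2 - 1 ≠ 0 := by
    contrapose! hu
    field_simp
    linear_combination hu
  match_scalars <;> (field_simp; try ring)

end QBracket

theorem qq_ne_zero : qq ≠ 0 := RatFunc.X_ne_zero

theorem qq_sub_inv_ne_zero : qq - qq⁻¹ ≠ 0 := by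
  rw [sub_ne_zero]
  intro h
  have hsq : qq * qq = 1 := by
    nth_rewrite 2 [h]
    exact mul_inv_cancel₀ qq_ne_zero
  have hdeg := congrArg RatFunc.intDegree hsq
  rw [RatFunc.intDegree_mul qq_ne_zero qq_ne_zero] at hdeg
  simp [qq] at hdeg

section Uq

variable (N : ℕ)

theorem KU_eq_zero {m : ℕ} (h : m = 0 ∨ N < m) : KU N m = 0 :=
  (RingQuot.mkAlgHom_rel kq (UqRel.Kzero m h)).trans (map_zero _)

theorem KinvU_eq_zero {m : ℕ} (h : m = 0 ∨ N < m) : KinvU N m = 0 :=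
  (RingQuot.mkAlgHom_rel kq (UqRel.Kinvzero m h)).trans (map_zero _)

theorem EU_eq_zero {j : ℕ} (h : j = 0 ∨ N < j + 1) : EU N j = 0 :=
  (RingQuot.mkAlgHom_rel kq (UqRel.Ezero j h)).trans (map_zero _)

theorem FU_eq_zero {j : ℕ} (h : j = 0 ∨ N < j + 1) : FU N j = 0 :=
  (RingQuot.mkAlgHom_rel kq (UqRel.Fzero j h)).trans (map_zero _)

theorem KU_mul_KinvU {m : ℕ} (h₁ : 1 ≤ m) (h₂ : m ≤ N) : KU N m * KinvU N m = 1 :=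
  (map_mul _ _ _).symm.trans ((RingQuot.mkAlgHom_rel kq (UqRel.KKinv m h₁ h₂)).trans (map_one _))

theorem KinvU_mul_KU {m : ℕ} (h₁ : 1 ≤ m) (h₂ : m ≤ N) : KinvU N m * KU N m = 1 :=
  (map_mul _ _ _).symm.trans ((RingQuot.mkAlgHom_rel kq (UqRel.KinvK m h₁ h₂)).trans (map_one _))

theorem commute_KU (a b : ℕ) : Commute (KU N a) (KU N b) := by
  by_cases ha : a = 0 ∨ N < a
  · simp [KU_eq_zero N ha]
  by_cases hb : b = 0 ∨ N < b
  · simp [KU_eq_zero N hb]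
  have h := RingQuot.mkAlgHom_rel kq
    (UqRel.KK (N := N) a b (by omega) (by omega) (by omega) (by omega))
  rw [map_mul, map_mul] at h
  exact h

theorem commute_EU_FU {i j : ℕ} (hij : i ≠ j) : Commute (EU N i) (FU N j) := by
  by_cases hi : i = 0 ∨ N < i + 1
  · simp [EU_eq_zero N hi]
  by_cases hj : j = 0 ∨ N < j + 1
  · simp [FU_eq_zero N hj]
  have h := RingQuot.mkAlgHom_rel kq
    (UqRel.EF (N := N) i j (by omega) (by omega) (by omega) (by omega))
  rw [if_neg hij, map_zero, map_sub, sub_eq_zero, map_mul, map_mul] at h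
  exact h

theorem EU_mul_FU_sub {j : ℕ} (h₁ : 1 ≤ j) (h₂ : j + 1 ≤ N) :
    EU N j * FU N j - FU N j * EU N j =
      (qq - qq⁻¹)⁻¹ • (KU N j * KinvU N (j + 1) - KU N (j + 1) * KinvU N j) := by
  have h := RingQuot.mkAlgHom_rel kq (UqRel.EF (N := N) j j h₁ h₂ h₁ h₂)
  rw [if_pos rfl] at h
  simp only [map_sub, map_mul, map_smul] at h
  exact h

theorem commute_KinvU_KU (a b : ℕ) : Commute (KinvU N a) (KU N b) := by
  by_cases ha : a = 0 ∨ N < a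
  · simp [KinvU_eq_zero N ha]
  have h := ((qCommute_one_iff (K := kq)).mpr (commute_KU N a b)).inv_left
    (KU_mul_KinvU N (by omega) (by omega)) (KinvU_mul_KU N (by omega) (by omega))
  rwa [inv_one, qCommute_one_iff] at h

theorem commute_KinvU_KinvU (a b : ℕ) : Commute (KinvU N a) (KinvU N b) := by
  by_cases ha : a = 0 ∨ N < a
  · simp [KinvU_eq_zero N ha]
  have h := ((qCommute_one_iff (K := kq)).mpr (commute_KinvU_KU N b a).symm).inv_left
    (KU_mul_KinvU N (by omega) (by omega)) (KinvU_mul_KU N (by omega) (by omega))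
  rwa [inv_one, qCommute_one_iff] at h

theorem commute_KU_mul_KinvU (a b c e : ℕ) :
    Commute (KU N a * KinvU N b) (KU N c * KinvU N e) :=
  ((commute_KU N a c).mul_right (commute_KinvU_KU N e a).symm).mul_left
    ((commute_KinvU_KU N b c).mul_right (commute_KinvU_KinvU N b e))

theorem KU_mul_KinvU_mul_KU_mul_KinvU (a : ℕ) {b : ℕ} (hb₁ : 1 ≤ b) (hb₂ : b ≤ N) (c : ℕ) :
    KU N a * KinvU N b * (KU N b * KinvU N c) = KU N a * KinvU N c := by
  rw [mul_assoc, ← mul_assoc (KinvU N b), KinvU_mul_KU N hb₁ hb₂, one_mul]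

/-- The weight `ε_a - ε_b` of `e_{ab}`. -/
def rootWeight (a b m : ℕ) : ℤ := (if m = a then 1 else 0) - (if m = b then 1 else 0)

theorem rootWeight_add_rootWeight (a b c : ℕ) :
    rootWeight a b + rootWeight b c = rootWeight a c := by
  funext m
  simp only [Pi.add_apply, rootWeight]
  ring

/-- Indices `m` outside `1..N` impose nothing here, since `KU N m = 0` for them. -/
def HasWeight (w : ℕ → ℤ) (x : Uq N) : Prop := ∀ m, QCommute (qq ^ w m) (KU N m) x

variable {N}

theorem hasWeight_zero (w : ℕ → ℤ) : HasWeight N w 0 := fun m => by simp [QCommute]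

theorem HasWeight.qBracket {v w : ℕ → ℤ} {x y : Uq N} (hx : HasWeight N v x)
    (hy : HasWeight N w y) (a : kq) : HasWeight N (v + w) (qBracket a x y) := fun m => by
  rw [Pi.add_apply, zpow_add₀ qq_ne_zero]
  exact (hx m).qBracket_right (hy m)

theorem HasWeight.qCommute_KU_mul_KinvU {w : ℕ → ℤ} {x : Uq N} (hx : HasWeight N w x) (a : ℕ)
    {b : ℕ} (hb₁ : 1 ≤ b) (hb₂ : b ≤ N) :
    QCommute (qq ^ (w a - w b)) (KU N a * KinvU N b) x := by
  rw [zpow_sub₀ qq_ne_zero, div_eq_mul_inv]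
  exact (hx a).mul_left ((hx b).inv_left (KU_mul_KinvU N hb₁ hb₂) (KinvU_mul_KU N hb₁ hb₂))

variable (N)

theorem hasWeight_EU (j : ℕ) : HasWeight N (rootWeight j (j + 1)) (EU N j) := by
  intro m
  by_cases hm : m = 0 ∨ N < m
  · simp [QCommute, KU_eq_zero N hm]
  by_cases hj : j = 0 ∨ N < j + 1
  · simp [QCommute, EU_eq_zero N hj]
  refine QCommute.of_mul_mul_eq (KinvU_mul_KU N (by omega) (by omega)) ?_
  have h := RingQuot.mkAlgHom_rel kq
    (UqRel.KE (N := N) m j (by omega) (by omega) (by omega) (by omega))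
  rw [map_mul, map_mul, map_smul] at h
  exact h

theorem hasWeight_FU (j : ℕ) : HasWeight N (rootWeight (j + 1) j) (FU N j) := by
  intro m
  by_cases hm : m = 0 ∨ N < m
  · simp [QCommute, KU_eq_zero N hm]
  by_cases hj : j = 0 ∨ N < j + 1
  · simp [QCommute, FU_eq_zero N hj]
  refine QCommute.of_mul_mul_eq (KinvU_mul_KU N (by omega) (by omega)) ?_
  have h := RingQuot.mkAlgHom_rel kq
    (UqRel.KF (N := N) m j (by omega) (by omega) (by omega) (by omega))
  rw [map_mul, map_mul, map_smul] at h
  exact h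

theorem eUpD_add_two (i d : ℕ) :
    eUpD N i (d + 2) = qBracket qq⁻¹ (eUpD N i (d + 1)) (EU N (i + d + 1)) := rfl

theorem eDnD_add_two (i d : ℕ) :
    eDnD N i (d + 2) = qBracket qq (FU N (i + d + 1)) (eDnD N i (d + 1)) := rfl

theorem hasWeight_eUpD (i d : ℕ) : HasWeight N (rootWeight i (i + d)) (eUpD N i d) := by
  induction d using Nat.twoStepInduction with
  | zero => exact hasWeight_zero _
  | one => exact hasWeight_EU N i
  | more d _ ih =>
    rw [eUpD_add_two, ← rootWeight_add_rootWeight i (i + d + 1)]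
    exact ih.qBracket (hasWeight_EU N (i + d + 1)) _

theorem hasWeight_eDnD (i d : ℕ) : HasWeight N (rootWeight (i + d) i) (eDnD N i d) := by
  induction d using Nat.twoStepInduction with
  | zero => exact hasWeight_zero _
  | one => exact hasWeight_FU N i
  | more d _ ih =>
    rw [eDnD_add_two, ← rootWeight_add_rootWeight (i + (d + 2)) (i + d + 1)]
    exact (hasWeight_FU N (i + d + 1)).qBracket ih _

theorem commute_FU_eUpD {m i d : ℕ} (h : i + d ≤ m) : Commute (FU N m) (eUpD N i d) := by
  induction d using Nat.twoStepInduction with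
  | zero => exact Commute.zero_right _
  | one => exact (commute_EU_FU N (by omega)).symm
  | more d _ ih => exact (ih (by omega)).qBracket_right (commute_EU_FU N (by omega)).symm

theorem commute_EU_eDnD {m i d : ℕ} (h : i + d ≤ m) : Commute (EU N m) (eDnD N i d) := by
  induction d using Nat.twoStepInduction with
  | zero => exact Commute.zero_right _
  | one => exact commute_EU_FU N (by omega)
  | more d _ ih => exact (commute_EU_FU N (by omega)).qBracket_right (ih (by omega))

theorem commutator_qBracket_EU_qBracket_FU {i j : ℕ} (hi : 1 ≤ i) (hij : i < j) (hj : j + 1 ≤ N)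
    {A B : Uq N} (hA : HasWeight N (rootWeight i j) A) (hB : HasWeight N (rootWeight j i) B)
    (hAF : Commute A (FU N j)) (hEB : Commute (EU N j) B)
    (hAB : A * B - B * A = (qq - qq⁻¹)⁻¹ • (KU N i * KinvU N j - KU N j * KinvU N i)) :
    qBracket qq⁻¹ A (EU N j) * qBracket qq (FU N j) B -
        qBracket qq (FU N j) B * qBracket qq⁻¹ A (EU N j) =
      (qq - qq⁻¹)⁻¹ • (KU N i * KinvU N (j + 1) - KU N (j + 1) * KinvU N i) := by
  have hji : j ≠ i := hij.ne'
  have hj₁i : j + 1 ≠ i := by omega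
  have hE := hasWeight_EU N j
  have hF := hasWeight_FU N j
  rw [← KU_mul_KinvU_mul_KU_mul_KinvU N i (b := j) (by omega) (by omega),
    ← KU_mul_KinvU_mul_KU_mul_KinvU N (j + 1) (b := j) (by omega) (by omega) i]
  refine commutator_qBracket_qBracket qq_sub_inv_ne_zero hAF hEB hAB
    (EU_mul_FU_sub N (by omega) hj) ?_ ?_ ?_ ?_ ?_ ?_ ?_ ?_
    (commute_KU_mul_KinvU N _ _ _ _) (commute_KU_mul_KinvU N _ _ _ _)
    (commute_KU_mul_KinvU N _ _ _ _) (commute_KU_mul_KinvU N _ _ _ _)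
  · simpa [rootWeight, hji.symm, hj₁i.symm] using
      hE.qCommute_KU_mul_KinvU i (b := j) (by omega) (by omega)
  · simpa [rootWeight, hji.symm, hj₁i.symm] using
      hE.qCommute_KU_mul_KinvU j (b := i) hi (by omega)
  · simpa [rootWeight, hji.symm, hj₁i.symm] using
      hF.qCommute_KU_mul_KinvU i (b := j) (by omega) (by omega)
  · simpa [rootWeight, hji.symm, hj₁i.symm] using
      hF.qCommute_KU_mul_KinvU j (b := i) hi (by omega)
  · simpa [rootWeight, hji, hj₁i] using
      hA.qCommute_KU_mul_KinvU j (b := j + 1) (by omega) hj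
  · simpa [rootWeight, hji, hj₁i] using
      hA.qCommute_KU_mul_KinvU (j + 1) (b := j) (by omega) (by omega)
  · simpa [rootWeight, hji, hj₁i] using
      hB.qCommute_KU_mul_KinvU j (b := j + 1) (by omega) hj
  · simpa [rootWeight, hji, hj₁i] using
      hB.qCommute_KU_mul_KinvU (j + 1) (b := j) (by omega) (by omega)

theorem commutator_eUpD_eDnD {i : ℕ} (hi : 1 ≤ i) (d : ℕ) (hd : i + d + 1 ≤ N) :
    eUpD N i (d + 1) * eDnD N i (d + 1) - eDnD N i (d + 1) * eUpD N i (d + 1) =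
      (qq - qq⁻¹)⁻¹ • (KU N i * KinvU N (i + d + 1) - KU N (i + d + 1) * KinvU N i) := by
  induction d with
  | zero => exact EU_mul_FU_sub N hi hd
  | succ d ih =>
    exact commutator_qBracket_EU_qBracket_FU N hi (by omega) hd (hasWeight_eUpD N i (d + 1))
      (hasWeight_eDnD N i (d + 1)) (commute_FU_eUpD N le_rfl).symm (commute_EU_eDnD N le_rfl)
      (ih (by omega))

end Uq

theorem commutator_eij_eji_general (N : ℕ) (i j : ℕ)
    (hi : 1 ≤ i) (hij : i < j) (hj : j ≤ N) :
    eGen N i j * eGen N j i - eGen N j i * eGen N i j =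
      (qq - qq⁻¹)⁻¹ • (KU N i * KinvU N j - KU N j * KinvU N i) := by
  obtain ⟨d, rfl⟩ : ∃ d, j = i + d + 1 := ⟨j - i - 1, by omega⟩
  have hup : eGen N i (i + d + 1) = eUpD N i (d + 1) := by
    rw [eGen, if_pos hij]
    congr 1
    omega
  have hdown : eGen N (i + d + 1) i = eDnD N i (d + 1) := by
    rw [eGen, if_neg (by omega), if_pos hij]
    congr 1
    omega
  rw [hup, hdown]
  exact commutator_eUpD_eDnD N hi d hj

/-- in `U_q(gl(N))`, for `1 ≤ i < j ≤ N`,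
`e_{ij} e_{ji} - e_{ji} e_{ij} = (q^{e_{ii}} q^{-e_{jj}} - q^{e_{jj}} q^{-e_{ii}})/(q - q⁻¹)`. -/
theorem commutator_eij_eji (N : ℕ) (hN : 2 ≤ N) (i j : ℕ)
    (hi : 1 ≤ i) (hij : i < j) (hj : j ≤ N) :
    eGen N i j * eGen N j i - eGen N j i * eGen N i j =
      (qq - qq⁻¹)⁻¹ • (KU N i * KinvU N j - KU N j * KinvU N i) :=
  commutator_eij_eji_general N i j hi hij hj
end

section
/- Let N = n + 1 with n ≥ 1, and let * be the noncompact Cartan involution of U_q(gl(n+1)) with circular q, i.e. the σ-semilinear involutive anti-automorphism with (q^{±e_{ii}})^* = q^{∓e_{ii}}, e_{i,i+1}^* = e_{i+1,i} and e_{i+1,i}^* = e_{i,i+1} for 1 ≤ i ≤ n-1, and e_{n,n+1}^* = -e_{n+1,n}, e_{n+1,n}^* = -e_{n,n+1}. Then for all 1 ≤ i ≤ n one has e_{i,n+1}^* = -e_{n+1,i} and e_{n+1,i}^* = -e_{i,n+1}, while for all 1 ≤ i ≠ j ≤ n one has e_{ij}^* = e_{ji}. -/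
/-- A `σ`-semilinear anti-automorphism of `U_q(gl(N))`: additive, `σ`-semilinear,
unital, anti-multiplicative and bijective. -/
def IsSemilinearAntiAut (N : ℕ) (σ : kq ≃+* kq) (φ : Uq N → Uq N) : Prop :=
  Function.Bijective φ ∧
  (∀ x y : Uq N, φ (x + y) = φ x + φ y) ∧
  (∀ (c : kq) (x : Uq N), φ (c • x) = σ c • φ x) ∧
  φ 1 = 1 ∧
  (∀ x y : Uq N, φ (x * y) = φ y * φ x)

/-- The property of being the noncompact Cartan involution `*` of `U_q(gl(n+1))` with
circular `q`, defining the real form `U_q(u(n,1))`: a `σ`-semilinear anti-automorphism with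
`(q^{±e_{ii}})^* = q^{∓e_{ii}}`, `e_{i,i+1}^* = e_{i+1,i}` and `e_{i+1,i}^* = e_{i,i+1}`
for `i ≠ n`, and `e_{n,n+1}^* = -e_{n+1,n}`, `e_{n+1,n}^* = -e_{n,n+1}`. -/
def IsNoncompactStarCirc (n N : ℕ) (σ : kq ≃+* kq) (φ : Uq N → Uq N) : Prop :=
  IsSemilinearAntiAut N σ φ ∧
  (∀ i, 1 ≤ i → i ≤ N → φ (KU N i) = KinvU N i ∧ φ (KinvU N i) = KU N i) ∧
  (∀ i, 1 ≤ i → i + 1 ≤ N → i ≠ n → φ (EU N i) = FU N i ∧ φ (FU N i) = EU N i) ∧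
  φ (EU N n) = -FU N n ∧ φ (FU N n) = -EU N n

/-!
The root vectors are built from the simple ones by `q`-commutators, and a `σ`-semilinear
anti-automorphism with `σ q = q⁻¹` sends the `q⁻¹`-commutator `a b - q⁻¹ b a` to the
`q`-commutator `b* a* - q a* b*`. Hence `*` carries the raising recursion for `e_{i,j}` into
the lowering recursion for `e_{j,i}` (and back), as long as it exchanges `e_{k,k+1}` and
`e_{k+1,k}` for every simple root involved. For `j ≤ n` this is the case; for `j = n + 1`
the last step uses `e_{n,n+1}`, whose image carries a sign, and a `q`-commutator is linear
in each factor, so the sign comes out.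
-/

theorem neg_mul_sub_smul_mul_neg {R A : Type*} [CommRing R] [Ring A] [Module R A]
    (c : R) (a b : A) : -a * b - c • (b * -a) = -(a * b - c • (b * a)) := by
  rw [neg_mul, mul_neg, smul_neg, sub_neg_eq_add, neg_sub, neg_add_eq_sub]

theorem mul_neg_sub_smul_neg_mul {R A : Type*} [CommRing R] [Ring A] [Module R A]
    (c : R) (a b : A) : a * -b - c • (-b * a) = -(a * b - c • (b * a)) := by
  rw [neg_mul, mul_neg, smul_neg, sub_neg_eq_add, neg_sub, neg_add_eq_sub]

namespace IsSemilinearAntiAut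

variable {N : ℕ} {σ : kq ≃+* kq} {φ : Uq N → Uq N}

theorem map_neg (hφ : IsSemilinearAntiAut N σ φ) (x : Uq N) : φ (-x) = -φ x := by
  obtain ⟨-, -, hsmul, -, -⟩ := hφ
  rw [← neg_one_smul kq x, hsmul, _root_.map_neg, map_one]
  exact neg_one_smul kq (φ x)

theorem map_zero (hφ : IsSemilinearAntiAut N σ φ) : φ 0 = 0 := by
  simpa using hφ.2.1 0 0

theorem map_sub (hφ : IsSemilinearAntiAut N σ φ) (x y : Uq N) : φ (x - y) = φ x - φ y := by
  rw [sub_eq_add_neg, hφ.2.1, hφ.map_neg, ← sub_eq_add_neg]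

theorem map_qcomm (hφ : IsSemilinearAntiAut N σ φ) (c : kq) (a b : Uq N) :
    φ (a * b - c • (b * a)) = φ b * φ a - σ c • (φ a * φ b) := by
  rw [hφ.map_sub, hφ.2.2.2.2, hφ.2.2.1, hφ.2.2.2.2]

variable (hφ : IsSemilinearAntiAut N σ φ) (hσ : σ qq = qq⁻¹) {i : ℕ}
include hφ hσ

theorem map_eUpD {d : ℕ} (hE : ∀ k, i ≤ k → k < i + d → φ (EU N k) = FU N k) :
    φ (eUpD N i d) = eDnD N i d := by
  induction d using Nat.strong_induction_on with
  | _ d ih =>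
    match d with
    | 0 => exact hφ.map_zero
    | 1 => exact hE i le_rfl (by omega)
    | d + 2 =>
      rw [eUpD, eDnD, hφ.map_qcomm, map_inv₀, hσ, inv_inv, hE _ (by omega) (by omega),
        ih (d + 1) (by omega) fun k hik hk => hE k hik (by omega)]

theorem map_eDnD {d : ℕ} (hF : ∀ k, i ≤ k → k < i + d → φ (FU N k) = EU N k) :
    φ (eDnD N i d) = eUpD N i d := by
  induction d using Nat.strong_induction_on with
  | _ d ih =>
    match d with
    | 0 => exact hφ.map_zero
    | 1 => exact hF i le_rfl (by omega)
    | d + 2 =>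
      rw [eUpD, eDnD, hφ.map_qcomm, hσ, hF _ (by omega) (by omega),
        ih (d + 1) (by omega) fun k hik hk => hF k hik (by omega)]

theorem map_eUpD_succ_of_map_EU_neg {d : ℕ}
    (hE : ∀ k, i ≤ k → k < i + d → φ (EU N k) = FU N k)
    (hlast : φ (EU N (i + d)) = -FU N (i + d)) :
    φ (eUpD N i (d + 1)) = -eDnD N i (d + 1) := by
  match d with
  | 0 => exact hlast
  | d + 1 =>
    rw [eUpD, eDnD, hφ.map_qcomm, map_inv₀, hσ, inv_inv,
      show i + d + 1 = i + (d + 1) by omega, hlast, hφ.map_eUpD hσ hE]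
    exact neg_mul_sub_smul_mul_neg qq _ _

theorem map_eDnD_succ_of_map_FU_neg {d : ℕ}
    (hF : ∀ k, i ≤ k → k < i + d → φ (FU N k) = EU N k)
    (hlast : φ (FU N (i + d)) = -EU N (i + d)) :
    φ (eDnD N i (d + 1)) = -eUpD N i (d + 1) := by
  match d with
  | 0 => exact hlast
  | d + 1 =>
    rw [eUpD, eDnD, hφ.map_qcomm, hσ, show i + d + 1 = i + (d + 1) by omega, hlast,
      hφ.map_eDnD hσ hF]
    exact mul_neg_sub_smul_neg_mul qq⁻¹ _ _

end IsSemilinearAntiAut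

theorem eGen_of_lt {N i j : ℕ} (h : i < j) : eGen N i j = eUpD N i (j - i) := if_pos h

theorem eGen_of_gt {N i j : ℕ} (h : j < i) : eGen N i j = eDnD N j (i - j) := by
  rw [eGen, if_neg (by omega), if_pos h]

theorem noncompact_star_circular_on_cartan_weyl_general (n : ℕ)
    (σ : kq ≃+* kq) (hσ : σ qq = qq⁻¹)
    (φ : Uq (n + 1) → Uq (n + 1)) (hφ : IsNoncompactStarCirc n (n + 1) σ φ) :
    (∀ i, 1 ≤ i → i ≤ n →
      φ (eGen (n + 1) i (n + 1)) = -eGen (n + 1) (n + 1) i ∧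
      φ (eGen (n + 1) (n + 1) i) = -eGen (n + 1) i (n + 1)) ∧
    (∀ i j, 1 ≤ i → i ≤ n → 1 ≤ j → j ≤ n → i ≠ j →
      φ (eGen (n + 1) i j) = eGen (n + 1) j i) := by
  obtain ⟨hanti, -, hEF, hEn, hFn⟩ := hφ
  have hE : ∀ k, 1 ≤ k → k < n → φ (EU (n + 1) k) = FU (n + 1) k :=
    fun k hk hkn => (hEF k hk (by omega) (by omega)).1
  have hF : ∀ k, 1 ≤ k → k < n → φ (FU (n + 1) k) = EU (n + 1) k :=
    fun k hk hkn => (hEF k hk (by omega) (by omega)).2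
  refine ⟨fun i hi hin => ?_, fun i j hi hin hj hjn hij => ?_⟩
  · obtain ⟨d, rfl⟩ : ∃ d, n = i + d := ⟨n - i, by omega⟩
    rw [eGen_of_lt (by omega), eGen_of_gt (by omega), show i + d + 1 - i = d + 1 by omega]
    exact ⟨hanti.map_eUpD_succ_of_map_EU_neg hσ (fun k hik hk => hE k (by omega) hk) hEn,
      hanti.map_eDnD_succ_of_map_FU_neg hσ (fun k hik hk => hF k (by omega) hk) hFn⟩
  · rcases lt_or_gt_of_ne hij with h | h
    · rw [eGen_of_lt h, eGen_of_gt h]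
      exact hanti.map_eUpD hσ fun k hik hk => hE k (by omega) (by omega)
    · rw [eGen_of_gt h, eGen_of_lt h]
      exact hanti.map_eDnD hσ fun k hik hk => hF k (by omega) (by omega)

/-- for the noncompact Cartan involution `*` of `U_q(gl(n+1))` with circular
`q`, one has `e_{i,n+1}^* = -e_{n+1,i}` and `e_{n+1,i}^* = -e_{i,n+1}` for `1 ≤ i ≤ n`, and
`e_{ij}^* = e_{ji}` for `1 ≤ i ≠ j ≤ n`. -/
theorem noncompact_star_circular_on_cartan_weyl (n : ℕ) (hn : 1 ≤ n)
    (σ : kq ≃+* kq) (hσ : σ qq = qq⁻¹)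
    (φ : Uq (n + 1) → Uq (n + 1)) (hφ : IsNoncompactStarCirc n (n + 1) σ φ)
    (hinv : ∀ x, φ (φ x) = x) :
    (∀ i, 1 ≤ i → i ≤ n →
      φ (eGen (n + 1) i (n + 1)) = -eGen (n + 1) (n + 1) i ∧
      φ (eGen (n + 1) (n + 1) i) = -eGen (n + 1) i (n + 1)) ∧
    (∀ i j, 1 ≤ i → i ≤ n → 1 ≤ j → j ≤ n → i ≠ j →
      φ (eGen (n + 1) i j) = eGen (n + 1) j i) :=
  noncompact_star_circular_on_cartan_weyl_general n σ hσ φ hφ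
end
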